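/- Let A be a Banach algebra and σ : A → A a continuous algebra homomorphism. If A has a σ-approximate diagonal, then A has a σ-virtual diagonal; in particular, A has a σ-virtual diagonal if and only if A has a σ-approximate diagonal. -/

import Mathlib

/-!
Statement 8: Let A be a Banach algebra and σ : A → A a continuous algebra
homomorphism. If A has a σ-approximate diagonal, then A has a σ-virtual
diagonal; in particular, A has a σ-virtual diagonal if and only if A has a
σ-approximate diagonal.

The projective tensor product `A ⊗̂ A` is modelled abstractly as a Banach
space `E` with a continuous bilinear cross-norm map `tm` satisfying the
isometric universal property, the canonical `A`-bimodule actions `l`, `r`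
and the diagonal map `pr`.  A σ-virtual diagonal is `M ∈ E**` with
`σ(a)·M = M·σ(a)` and `π**(M)·σ(a) = σ(a)`; a σ-approximate diagonal is a
bounded net `(m i)` in `E` with `m i·σ(a) − σ(a)·m i → 0` and
`π(m i)·σ(a) → σ(a)` in norm.
-/

universe u

open Filter

/-- `A` has a σ-virtual diagonal (w.r.t. the model `E` of `A ⊗̂ A`). -/
def HasSigmaVirtualDiagonal
    (A : Type u) [NonUnitalNormedRing A] [NormedSpace ℂ A]
    [IsScalarTower ℂ A A] [SMulCommClass ℂ A A]
    (σ : A →L[ℂ] A)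
    (E : Type u) [NormedAddCommGroup E] [NormedSpace ℂ E]
    (l r : A →L[ℂ] E →L[ℂ] E) (pr : E →L[ℂ] A) : Prop :=
  ∃ M : (E →L[ℂ] ℂ) →L[ℂ] ℂ,
    (∀ (a : A) (lam : E →L[ℂ] ℂ),
      M (lam.comp (l (σ a))) = M (lam.comp (r (σ a)))) ∧
    (∀ (a : A) (mu : A →L[ℂ] ℂ),
      M ((mu.comp ((ContinuousLinearMap.mul ℂ A).flip (σ a))).comp pr)
        = mu (σ a))

/-- `A` has a σ-approximate diagonal (w.r.t. the model `E` of `A ⊗̂ A`). -/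
def HasSigmaApproximateDiagonal
    (A : Type u) [NonUnitalNormedRing A] [NormedSpace ℂ A]
    [IsScalarTower ℂ A A] [SMulCommClass ℂ A A]
    (σ : A →L[ℂ] A)
    (E : Type u) [NormedAddCommGroup E] [NormedSpace ℂ E]
    (l r : A →L[ℂ] E →L[ℂ] E) (pr : E →L[ℂ] A) : Prop :=
  ∃ (ι : Type u) (pι : Preorder ι),
    Nonempty ι ∧ IsDirected ι (fun i j => pι.le i j) ∧
    ∃ (m : ι → E) (C : ℝ),
      (∀ i, ‖m i‖ ≤ C) ∧
      ∀ a : A,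
        Tendsto (fun i => r (σ a) (m i) - l (σ a) (m i))
          (@Filter.atTop ι pι) (nhds 0) ∧
        Tendsto (fun i => pr (m i) * σ a) (@Filter.atTop ι pι) (nhds (σ a))

/-!
A bounded approximate diagonal has a weak-* cluster point `M` in the bidual of `A ⊗̂ A`
(Banach–Alaoglu along an ultrafilter), and both defining limits pass to `M`.

Conversely, fix a virtual diagonal `M` and finitely many `a ∈ A`. The bidual of
`T : m ↦ (m·σ(a) − σ(a)·m, π(m)σ(a))_a` sends `M` to `(0, σ(a))_a`. Since `T` maps the ball of
radius `‖M‖` onto a convex set, Hahn–Banach separation puts `(0, σ(a))_a` in its norm closure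
(Goldstine's theorem combined with Mazur's lemma). Indexing these approximants by a finite set
of `a` and a tolerance `1/(n+1)` gives a σ-approximate diagonal.
-/

open Filter Topology Metric ContinuousLinearMap

section Bidual

variable {𝕜 E : Type*} [RCLike 𝕜] [NormedAddCommGroup E] [NormedSpace 𝕜 E]

theorem exists_tendsto_ultrafilter_bidual {ι : Type*} (𝒰 : Ultrafilter ι) {m : ι → E} {C : ℝ}
    (hC : ∀ i, ‖m i‖ ≤ C) :
    ∃ M : StrongDual 𝕜 (StrongDual 𝕜 E),
      ∀ φ : StrongDual 𝕜 E, Tendsto (fun i => φ (m i)) 𝒰 (𝓝 (M φ)) := by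
  let J : ι → WeakDual 𝕜 (StrongDual 𝕜 E) :=
    fun i => StrongDual.toWeakDual (NormedSpace.inclusionInDoubleDual 𝕜 E (m i))
  -- `E :=` is needed: through `WeakDual.toStrongDual` the bidual carries unfolded instances
  have hJ : ∀ i, J i ∈ WeakDual.toStrongDual ⁻¹' closedBall 0 C := fun i =>
    (mem_closedBall_zero_iff (E := StrongDual 𝕜 (StrongDual 𝕜 E))).2
      ((NormedSpace.double_dual_bound 𝕜 E (m i)).trans (hC i))
  obtain ⟨M, -, hM⟩ := (WeakDual.isCompact_closedBall 0 C).ultrafilter_le_nhds (𝒰.map J)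
    (le_principal_iff.2 (Ultrafilter.mem_map.2 (univ_mem' hJ)))
  exact ⟨M, fun φ => ((WeakDual.eval_continuous φ).tendsto M).comp hM⟩

theorem bidual_apply_comp_pi (M : StrongDual 𝕜 (StrongDual 𝕜 E)) {ι : Type*} [Fintype ι]
    {Y : ι → Type*} [∀ i, NormedAddCommGroup (Y i)] [∀ i, NormedSpace 𝕜 (Y i)]
    {T : ∀ i, E →L[𝕜] Y i} {y : ∀ i, Y i}
    (h : ∀ i (φ : StrongDual 𝕜 (Y i)), M (φ.comp (T i)) = φ (y i))
    (φ : StrongDual 𝕜 (∀ i, Y i)) : M (φ.comp (pi T)) = φ y := by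
  classical
  have hφ : φ.comp (pi T) = ∑ i, (φ.comp (single 𝕜 Y i)).comp (T i) := by
    ext x
    simp [← sum_comp_single 𝕜 Y φ (fun i => T i x)]
  rw [hφ, map_sum, ← sum_comp_single 𝕜 Y φ y]
  exact Finset.sum_congr rfl fun i _ => h i _

theorem bidual_apply_comp_prod (M : StrongDual 𝕜 (StrongDual 𝕜 E)) {Y Z : Type*}
    [NormedAddCommGroup Y] [NormedSpace 𝕜 Y] [NormedAddCommGroup Z] [NormedSpace 𝕜 Z]
    {T : E →L[𝕜] Y} {S : E →L[𝕜] Z} {y : Y} {z : Z}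
    (hT : ∀ φ : StrongDual 𝕜 Y, M (φ.comp T) = φ y)
    (hS : ∀ φ : StrongDual 𝕜 Z, M (φ.comp S) = φ z)
    (φ : StrongDual 𝕜 (Y × Z)) : M (φ.comp (T.prod S)) = φ (y, z) := by
  have hφ : φ.comp (T.prod S) = (φ.comp (inl 𝕜 Y Z)).comp T + (φ.comp (inr 𝕜 Y Z)).comp S := by
    ext x
    simp [← φ.comp_inl_add_comp_inr (T x, S x)]
  rw [hφ, map_add, hT, hS, φ.comp_inl_add_comp_inr (y, z)]

theorem mul_norm_le_of_forall_mem_closedBall_re_lt (ψ : StrongDual 𝕜 E) {R u : ℝ} (hR : 0 ≤ R)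
    (hψ : ∀ x ∈ closedBall (0 : E) R, RCLike.re (ψ x) < u) : R * ‖ψ‖ ≤ u := by
  have hnorm : ∀ x ∈ closedBall (0 : E) R, ‖ψ x‖ ≤ u := by
    intro x hx
    obtain ⟨c, hc, hcx⟩ := RCLike.exists_norm_eq_mul_self (ψ x)
    have hcx' : ψ (c • x) = ‖ψ x‖ := by rw [map_smul, smul_eq_mul, hcx]
    have := hψ (c • x) (by simpa [norm_smul, hc] using hx)
    rw [hcx', RCLike.ofReal_re] at this
    exact this.le
  rcases hR.eq_or_lt with rfl | hR
  · simpa using hnorm 0 (mem_closedBall_self le_rfl)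
  · rw [← le_div_iff₀' hR]
    exact opNorm_bound_of_ball_bound hR u ψ hnorm

variable [NormedSpace ℝ E] [IsScalarTower ℝ 𝕜 E]
  {Y : Type*} [NormedAddCommGroup Y] [NormedSpace 𝕜 Y] [NormedSpace ℝ Y] [IsScalarTower ℝ 𝕜 Y]

theorem mem_closure_image_closedBall_of_bidual (T : E →L[𝕜] Y)
    (M : StrongDual 𝕜 (StrongDual 𝕜 E)) {y : Y}
    (hM : ∀ φ : StrongDual 𝕜 Y, M (φ.comp T) = φ y) :
    y ∈ closure (T '' closedBall 0 ‖M‖) := by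
  by_contra hy
  have hconv : Convex ℝ (T '' closedBall 0 ‖M‖) :=
    (convex_closedBall 0 ‖M‖).linear_image (T.toLinearMap.restrictScalars ℝ)
  obtain ⟨φ, u, hφ, hu⟩ :=
    RCLike.geometric_hahn_banach_closed_point (𝕜 := 𝕜) hconv.closure isClosed_closure hy
  have hball : ‖M‖ * ‖φ.comp T‖ ≤ u :=
    mul_norm_le_of_forall_mem_closedBall_re_lt _ (norm_nonneg M)
      fun x hx => hφ _ (subset_closure (Set.mem_image_of_mem T hx))
  have : RCLike.re (φ y) ≤ ‖M‖ * ‖φ.comp T‖ := by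
    rw [← hM]
    exact (RCLike.re_le_norm _).trans (M.le_opNorm _)
  linarith

end Bidual

theorem exists_net_tendsto_of_mem_closure {α X Y : Type*} [PseudoMetricSpace Y]
    {K : Set X} {f : X → α → Y} {y : α → Y}
    (h : ∀ F : Finset α, (fun a : F => y a) ∈ closure ((fun x (a : F) => f x a) '' K)) :
    ∃ x : Finset α × ℕ → X, (∀ i, x i ∈ K) ∧
      ∀ a, Tendsto (fun i => f (x i) a) atTop (𝓝 (y a)) := by
  classical
  have happrox : ∀ i : Finset α × ℕ, ∃ x ∈ K, ∀ a ∈ i.1, dist (f x a) (y a) < 1 / (i.2 + 1) := by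
    rintro ⟨F, n⟩
    obtain ⟨_, ⟨x, hxK, rfl⟩, hx⟩ := mem_closure_iff.1 (h F) _ Nat.one_div_pos_of_nat
    refine ⟨x, hxK, fun a ha => ?_⟩
    rw [dist_comm] at hx
    exact (dist_le_pi_dist _ _ ⟨a, ha⟩).trans_lt hx
  choose x hxK hx using happrox
  refine ⟨x, hxK, fun a => tendsto_atTop.2 fun ε hε => ?_⟩
  obtain ⟨N, hN⟩ := exists_nat_one_div_lt hε
  refine ⟨({a}, N), fun i hi => (hx i a (hi.1 (Finset.mem_singleton_self a))).trans_le ?_⟩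
  calc (1 : ℝ) / (i.2 + 1) ≤ 1 / (N + 1) := Nat.one_div_le_one_div hi.2
    _ ≤ ε := hN.le

section SigmaDiagonal

variable {A : Type u} [NonUnitalNormedRing A] [NormedSpace ℂ A]
  [IsScalarTower ℂ A A] [SMulCommClass ℂ A A] {σ : A →L[ℂ] A}
  {E : Type u} [NormedAddCommGroup E] [NormedSpace ℂ E]
  {l r : A →L[ℂ] E →L[ℂ] E} {pr : E →L[ℂ] A}

theorem HasSigmaApproximateDiagonal.hasSigmaVirtualDiagonal
    (h : HasSigmaApproximateDiagonal A σ E l r pr) : HasSigmaVirtualDiagonal A σ E l r pr := by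
  obtain ⟨ι, _, _, _, m, C, hmC, hm⟩ := h
  let 𝒰 : Ultrafilter ι := .of atTop
  have h𝒰 : (𝒰 : Filter ι) ≤ atTop := Ultrafilter.of_le _
  obtain ⟨M, hM⟩ := exists_tendsto_ultrafilter_bidual (𝕜 := ℂ) 𝒰 hmC
  refine ⟨M, fun a φ => ?_, fun a μ => ?_⟩
  · have hsub := (hM (φ.comp (r (σ a)))).sub (hM (φ.comp (l (σ a))))
    have hlim := (φ.continuous.tendsto 0).comp ((hm a).1.mono_left h𝒰)
    simp only [Function.comp_def, map_sub, map_zero] at hlim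
    exact (sub_eq_zero.1 (tendsto_nhds_unique hsub hlim)).symm
  · refine tendsto_nhds_unique (hM _) ?_
    exact (μ.continuous.tendsto _).comp ((hm a).2.mono_left h𝒰)

theorem HasSigmaVirtualDiagonal.hasSigmaApproximateDiagonal
    (h : HasSigmaVirtualDiagonal A σ E l r pr) : HasSigmaApproximateDiagonal A σ E l r pr := by
  classical
  obtain ⟨M, hM₁, hM₂⟩ := h
  let T (a : A) : E →L[ℂ] E × A :=
    (r (σ a) - l (σ a)).prod ((ContinuousLinearMap.mul ℂ A).flip (σ a) ∘L pr)
  have hT (a : A) (φ : StrongDual ℂ (E × A)) : M (φ ∘L T a) = φ (0, σ a) :=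
    bidual_apply_comp_prod M (fun φ => by rw [comp_sub, map_sub, hM₁, sub_self, map_zero])
      (hM₂ a) φ
  obtain ⟨m, hmM, hm⟩ := exists_net_tendsto_of_mem_closure (f := fun x a => T a x)
    (y := fun a => (0, σ a)) fun F =>
      mem_closure_image_closedBall_of_bidual _ M (bidual_apply_comp_pi M fun a : F => hT a)
  refine ⟨Finset A × ℕ, inferInstance, inferInstance, inferInstance, m, ‖M‖,
    fun i => mem_closedBall_zero_iff.1 (hmM i), fun a => ⟨?_, ?_⟩⟩
  · simpa [T] using (hm a).fst_nhds
  · simpa [T] using (hm a).snd_nhds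

end SigmaDiagonal

theorem sigma_approximate_diagonal_iff_sigma_virtual_diagonal
    -- A is a Banach algebra
    (A : Type u) [NonUnitalNormedRing A] [NormedSpace ℂ A]
    [IsScalarTower ℂ A A] [SMulCommClass ℂ A A]
    -- σ is a continuous algebra homomorphism on A
    (σ : A →L[ℂ] A)
    -- E is the projective tensor product A ⊗̂ A
    (E : Type u) [NormedAddCommGroup E] [NormedSpace ℂ E]
    -- the A-bimodule actions on E
    (l r : A →L[ℂ] E →L[ℂ] E)
    -- the diagonal map π
    (pr : E →L[ℂ] A) :
    -- an approximate diagonal yields a virtual diagonal, and in fact the two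
    -- notions are equivalent
    (HasSigmaApproximateDiagonal A σ E l r pr →
      HasSigmaVirtualDiagonal A σ E l r pr) ∧
    (HasSigmaVirtualDiagonal A σ E l r pr ↔
      HasSigmaApproximateDiagonal A σ E l r pr) :=
  ⟨HasSigmaApproximateDiagonal.hasSigmaVirtualDiagonal,
    HasSigmaVirtualDiagonal.hasSigmaApproximateDiagonal,
    HasSigmaApproximateDiagonal.hasSigmaVirtualDiagonal⟩
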